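/- Let v = (1,0,−m) in the Mukai lattice of a K3 surface, m ≥ 1. The stabilizer Γ_v of v in the isometry group of the Mukai lattice, viewed inside O(v^⊥), equals the kernel of the natural homomorphism O(v^⊥) → O((v^⊥)^*/v^⊥) to the isometry group of the discriminant group. In particular Γ_v = O(v^⊥) if and only if m = 1. -/

import Mathlib

/-!
Put `u = (0, 1) ∈ L = M × ℤ ≅ v^⊥`, so `u² = -2m` and, `M` being unimodular, `L^*/L ≅ ℤ/2m` is
generated by `u / 2m`. Hence an isometry `h` of `L` acts trivially on the discriminant group iff
`h u ≡ u mod 2m L`.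

Every element of the Mukai lattice is uniquely `ι p + s • e` with `ι (c, r) = (r, c, r m)` the
embedding of `L` and `e = (0, 0, 1)`, and `ι u - v = 2m • e`. So an extension `g` of `h` fixing `v`
satisfies `2m • g e = ι (h u) - v`, which forces `h u ≡ u mod 2m L`. Conversely, if
`h u = u + 2m • w`, the shear `ι p + s • e ↦ ι (h p + s • w) + s • e` is such an extension; it is an
isometry because `⟪w, h p⟫ = (h p).2 - p.2` and `⟪w, w⟫ = 2 w.2`.

For `m = 1` the congruence always holds: `(h u).1 ∈ 2M` by unimodularity, and `(h u)² = -2` then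
makes `(h u).2` odd. For `m > 1` it fails for `h = -1`.
-/

/-- The Mukai pairing on `ℤ ⊕ M ⊕ ℤ`. -/
def mukaiForm {R : Type} [CommRing R] {M : Type} [AddCommGroup M] [Module R M]
    (B : M →ₗ[R] M →ₗ[R] R) : (R × M × R) →ₗ[R] (R × M × R) →ₗ[R] R :=
  LinearMap.mk₂ R (fun x y => B x.2.1 y.2.1 - x.1 * y.2.2 - y.1 * x.2.2)
    (fun x x' y => by simp [add_mul]; ring)
    (fun c x y => by simp [smul_eq_mul]; ring)
    (fun x y y' => by simp [mul_add]; ring)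
    (fun c x y => by simp [smul_eq_mul]; ring)

/-- The form on `v^⊥ ≅ M × ℤ` (for `v = (1,0,−m)`, via `(c,r) ↦ (r,c,rm)`). -/
def perpForm {M : Type} [AddCommGroup M] [Module ℤ M]
    (B : M →ₗ[ℤ] M →ₗ[ℤ] ℤ) (m : ℤ) : (M × ℤ) →ₗ[ℤ] (M × ℤ) →ₗ[ℤ] ℤ :=
  LinearMap.mk₂ ℤ (fun x y => B x.1 y.1 - 2 * m * x.2 * y.2)
    (fun x x' y => by simp; ring)
    (fun c x y => by simp [smul_eq_mul]; ring)
    (fun x y y' => by simp; ring)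
    (fun c x y => by simp [smul_eq_mul]; ring)

section

variable {R M : Type} [CommRing R] [AddCommGroup M] [Module R M]

@[simp] lemma mukaiForm_apply (B : M →ₗ[R] M →ₗ[R] R) (x y : R × M × R) :
    mukaiForm B x y = B x.2.1 y.2.1 - x.1 * y.2.2 - y.1 * x.2.2 := rfl

lemma LinearMap.IsOrthogonal.comp_mem_range {Q : LinearMap.BilinForm R M} {h : M →ₗ[R] M}
    (hiso : Q.IsOrthogonal h) (hh : Function.Surjective h) {φ : M →ₗ[R] R}
    (hφ : φ ∈ LinearMap.range Q) : φ ∘ₗ h ∈ LinearMap.range Q := by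
  obtain ⟨a, rfl⟩ := hφ
  obtain ⟨b, rfl⟩ := hh a
  exact ⟨b, LinearMap.ext fun x => (hiso b x).symm⟩

end

section

variable {M : Type} [AddCommGroup M] (B : M →ₗ[ℤ] M →ₗ[ℤ] ℤ) (m : ℤ)

@[simp] lemma perpForm_apply (x y : M × ℤ) :
    perpForm B m x y = B x.1 y.1 - 2 * m * x.2 * y.2 := rfl

lemma perpForm_comm (hsymm : ∀ x y, B x y = B y x) (x y : M × ℤ) :
    perpForm B m x y = perpForm B m y x := by
  simp only [perpForm_apply, hsymm x.1]
  ring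

lemma perpForm_injective (hm : m ≠ 0) (hB : Function.Injective B) :
    Function.Injective (perpForm B m) := by
  refine (injective_iff_map_eq_zero _).2 fun x hx => ?_
  have h1 : x.1 = 0 := hB (LinearMap.ext fun d => by simpa using LinearMap.congr_fun hx (d, 0))
  have h2 : x.2 = 0 := by simpa [h1, hm] using LinearMap.congr_fun hx (0, 1)
  exact Prod.ext h1 h2

variable {B m} {h : M × ℤ →ₗ[ℤ] M × ℤ}

lemma perpForm_map_sub_apply_map (hiso : (perpForm B m).IsOrthogonal h) (p : M × ℤ) :
    perpForm B m (h (0, 1) - (0, 1)) (h p) = 2 * m * ((h p).2 - p.2) := by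
  rw [map_sub, LinearMap.sub_apply, hiso]
  simp only [perpForm_apply, map_zero, LinearMap.zero_apply]
  ring

lemma perpForm_apply_map_of_map_eq (hm : m ≠ 0) (hiso : (perpForm B m).IsOrthogonal h)
    {w : M × ℤ} (hw : h (0, 1) = (0, 1) + (2 * m) • w) (p : M × ℤ) :
    perpForm B m w (h p) = (h p).2 - p.2 := by
  have key := perpForm_map_sub_apply_map hiso p
  rw [hw, add_sub_cancel_left, map_smul, LinearMap.smul_apply, smul_eq_mul] at key
  exact mul_left_cancel₀ (mul_ne_zero two_ne_zero hm) key

lemma perpForm_self_of_map_eq (hm : m ≠ 0) (hiso : (perpForm B m).IsOrthogonal h)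
    {w : M × ℤ} (hw : h (0, 1) = (0, 1) + (2 * m) • w) :
    perpForm B m w w = 2 * w.2 := by
  have key := perpForm_apply_map_of_map_eq hm hiso hw (0, 1)
  simp only [hw, perpForm_apply, Prod.snd_add, Prod.smul_snd, smul_eq_mul, map_add, map_smul,
    map_zero] at key
  apply mul_left_cancel₀ (mul_ne_zero two_ne_zero hm)
  rw [perpForm_apply]
  linear_combination key

lemma forall_comp_sub_mem_range_perpForm_iff (hB : Function.Surjective B)
    (hh : Function.Surjective h) (hiso : (perpForm B m).IsOrthogonal h) :
    (∀ f : M × ℤ →ₗ[ℤ] ℤ, f ∘ₗ h - f ∈ LinearMap.range (perpForm B m)) ↔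
      ∃ z, ∀ p, perpForm B m z p = (h p).2 - p.2 := by
  let snd := (AddMonoidHom.snd M ℤ).toIntLinearMap
  refine ⟨fun H => ?_, fun H f => ?_⟩
  · obtain ⟨z, hz⟩ := H snd
    exact ⟨z, fun p => LinearMap.congr_fun hz p⟩
  obtain ⟨c, hc⟩ := hB (f.toAddMonoidHom.comp (AddMonoidHom.inl M ℤ)).toIntLinearMap
  -- `M` is unimodular, so `snd` generates `L^*` modulo `L`.
  have hf : f = perpForm B m (c, 0) + f (0, 1) • snd := by
    refine LinearMap.ext fun x => ?_
    have hx : x = (x.1, 0) + x.2 • (0, 1) := by ext <;> simp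
    conv_lhs => rw [hx, map_add, map_smul]
    simp [hc, snd, mul_comm]
  have hc_mem := LinearMap.mem_range_self (perpForm B m) (c, 0)
  obtain ⟨z, hz⟩ := H
  have hsnd : snd ∘ₗ h - snd ∈ LinearMap.range (perpForm B m) := ⟨z, LinearMap.ext hz⟩
  rw [hf, LinearMap.add_comp, LinearMap.smul_comp, add_sub_add_comm, ← smul_sub]
  exact add_mem (sub_mem (hiso.comp_mem_range hh hc_mem) hc_mem) (Submodule.smul_mem _ _ hsnd)

lemma exists_perpForm_apply_eq_iff (hm : m ≠ 0) (hB : Function.Injective B)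
    (hh : Function.Bijective h) (hiso : (perpForm B m).IsOrthogonal h) :
    (∃ z, ∀ p, perpForm B m z p = (h p).2 - p.2) ↔
      ∃ w : M × ℤ, h (0, 1) = (0, 1) + (2 * m) • w := by
  constructor
  · rintro ⟨z, hz⟩
    refine ⟨h z, ?_⟩
    rw [← sub_eq_iff_eq_add']
    refine perpForm_injective B m hm hB (LinearMap.ext fun y => ?_)
    obtain ⟨p, rfl⟩ := hh.2 y
    rw [perpForm_map_sub_apply_map hiso, map_smul, LinearMap.smul_apply, hiso, hz, smul_eq_mul]
  · rintro ⟨w, hw⟩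
    obtain ⟨z, rfl⟩ := hh.2 w
    exact ⟨z, fun p => by rw [← hiso, perpForm_apply_map_of_map_eq hm hiso hw]⟩

lemma exists_fst_map_eq_smul (hB : Function.Bijective B) (hh : Function.Bijective h)
    (hiso : (perpForm B m).IsOrthogonal h) : ∃ c : M, (h (0, 1)).1 = (2 * m) • c := by
  -- `B (h u).1 d = ⟪h u, (d, 0)⟫ = ⟪u, h⁻¹ (d, 0)⟫ = -2m (h⁻¹ (d, 0)).2`
  let e := LinearEquiv.ofBijective h hh
  obtain ⟨c, hc⟩ := hB.2 (-((AddMonoidHom.snd M ℤ).comp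
    ((e.symm : (M × ℤ) →+ M × ℤ).comp (AddMonoidHom.inl M ℤ))).toIntLinearMap)
  refine ⟨c, hB.1 (LinearMap.ext fun d => ?_)⟩
  have key := hiso (0, 1) (e.symm (d, 0))
  rw [show h (e.symm (d, 0)) = (d, 0) from e.apply_symm_apply (d, 0)] at key
  simp only [perpForm_apply, map_zero, LinearMap.zero_apply] at key
  simp only [map_smul, hc, smul_neg, LinearMap.neg_apply, LinearMap.smul_apply,
    AddMonoidHom.coe_toIntLinearMap, AddMonoidHom.coe_comp, AddMonoidHom.coe_snd,
    AddMonoidHom.coe_coe, Function.comp_apply, AddMonoidHom.inl_apply, Int.zsmul_eq_mul]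
  linear_combination key

lemma exists_map_eq_add_two_smul (hB : Function.Bijective B) (hh : Function.Bijective h)
    (hiso : (perpForm B 1).IsOrthogonal h) : ∃ w : M × ℤ, h (0, 1) = (0, 1) + (2 : ℤ) • w := by
  obtain ⟨c, hc⟩ := exists_fst_map_eq_smul hB hh hiso
  have hnorm := hiso (0, 1) (0, 1)
  obtain ⟨k, hk⟩ : Odd (h (0, 1)).2 := by
    have hsq : (h (0, 1)).2 * (h (0, 1)).2 = 2 * B c c + 1 := by
      simp only [perpForm_apply, hc, map_smul, LinearMap.smul_apply, smul_eq_mul, map_zero]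
        at hnorm
      linarith
    exact (Int.odd_mul.1 (hsq ▸ odd_two_mul_add_one _)).1
  exact ⟨(c, k), Prod.ext (by simpa using hc) (by simp [hk]; ring)⟩

lemma eq_one_of_neg_eq_add_smul {m : ℤ} (hm : 0 < m) {w : M × ℤ}
    (hw : -((0, 1) : M × ℤ) = (0, 1) + (2 * m) • w) : m = 1 := by
  have hw2 := congrArg Prod.snd hw
  simp only [Prod.snd_neg, Prod.snd_add, Prod.smul_snd, smul_eq_mul] at hw2
  exact Int.eq_one_of_mul_eq_one_right hm.le (by linarith : m * -w.2 = 1)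

end

section

variable {M : Type} [AddCommGroup M] (B : M →ₗ[ℤ] M →ₗ[ℤ] ℤ) (m : ℤ)

-- The coordinates `(s, p)` of `x = ι p + s • e`.
def mukaiCoord : (ℤ × M × ℤ) ≃ₗ[ℤ] ℤ × (M × ℤ) where
  toFun x := (x.2.2 - x.1 * m, (x.2.1, x.1))
  invFun y := (y.2.2, y.2.1, y.2.2 * m + y.1)
  map_add' x y := by ext <;> simp only [Prod.fst_add, Prod.snd_add]; ring
  map_smul' c x := by ext <;> simp; ring
  left_inv x := by ext <;> simp
  right_inv y := by ext <;> simp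

@[simp] lemma mukaiCoord_apply (x : ℤ × M × ℤ) :
    mukaiCoord m x = (x.2.2 - x.1 * m, (x.2.1, x.1)) := rfl

@[simp] lemma mukaiCoord_symm_apply (y : ℤ × (M × ℤ)) :
    (mukaiCoord m).symm y = (y.2.2, y.2.1, y.2.2 * m + y.1) := rfl

lemma mukaiForm_mukaiCoord_symm (s s' : ℤ) (p p' : M × ℤ) :
    mukaiForm B ((mukaiCoord m).symm (s, p)) ((mukaiCoord m).symm (s', p')) =
      perpForm B m p p' - s * p'.2 - s' * p.2 := by
  simp only [mukaiCoord_symm_apply, mukaiForm_apply, perpForm_apply]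
  ring

-- The shear `ι p + s • e ↦ ι (f p + s • w) + s • e`.
def mukaiExtension (f : (M × ℤ) ≃ₗ[ℤ] M × ℤ) (w : M × ℤ) : (ℤ × M × ℤ) ≃ₗ[ℤ] ℤ × M × ℤ :=
  (mukaiCoord m).trans <|
    ((LinearEquiv.refl ℤ ℤ).skewProd f (LinearMap.toSpanSingleton ℤ _ w)).trans (mukaiCoord m).symm

def IsMukaiExtension (h : M × ℤ →ₗ[ℤ] M × ℤ) (g : (ℤ × M × ℤ) →ₗ[ℤ] ℤ × M × ℤ) : Prop :=
  Function.Bijective g ∧ (mukaiForm B).IsOrthogonal g ∧ g (1, 0, -m) = (1, 0, -m) ∧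
    ∀ p : M × ℤ, g (p.2, p.1, p.2 * m) = ((h p).2, (h p).1, (h p).2 * m)

variable {B m} {h : M × ℤ →ₗ[ℤ] M × ℤ}

lemma mukaiExtension_mukaiCoord_symm (f : (M × ℤ) ≃ₗ[ℤ] M × ℤ) (w : M × ℤ) (s : ℤ) (p : M × ℤ) :
    mukaiExtension m f w ((mukaiCoord m).symm (s, p)) = (mukaiCoord m).symm (s, f p + s • w) := by
  simp [mukaiExtension]

lemma isOrthogonal_mukaiExtension (hsymm : ∀ x y, B x y = B y x) (hm : m ≠ 0)
    (hh : Function.Bijective h) (hiso : (perpForm B m).IsOrthogonal h)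
    {w : M × ℤ} (hw : h (0, 1) = (0, 1) + (2 * m) • w) :
    (mukaiForm B).IsOrthogonal (mukaiExtension m (LinearEquiv.ofBijective h hh) w) := by
  intro x y
  obtain ⟨⟨s, p⟩, rfl⟩ := (mukaiCoord m).symm.surjective x
  obtain ⟨⟨s', p'⟩, rfl⟩ := (mukaiCoord m).symm.surjective y
  have hp := perpForm_apply_map_of_map_eq hm hiso hw p
  have hp' := perpForm_apply_map_of_map_eq hm hiso hw p'
  have hww := perpForm_self_of_map_eq hm hiso hw
  simp only [mukaiExtension_mukaiCoord_symm, LinearEquiv.ofBijective_apply,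
    mukaiForm_mukaiCoord_symm, map_add, map_smul, LinearMap.add_apply, LinearMap.smul_apply,
    Prod.snd_add, Prod.smul_snd, smul_eq_mul]
  rw [perpForm_comm B m hsymm (h p) w]
  linear_combination hiso p p' + s * hp' + s' * hp + s * s' * hww

lemma mukaiExtension_apply_one_zero_neg (hh : Function.Bijective h) {w : M × ℤ}
    (hw : h (0, 1) = (0, 1) + (2 * m) • w) :
    mukaiExtension m (LinearEquiv.ofBijective h hh) w (1, 0, -m) = (1, 0, -m) := by
  have hv : ((1, 0, -m) : ℤ × M × ℤ) = (mukaiCoord m).symm (-(2 * m), (0, 1)) := by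
    ext <;> simp; ring
  rw [hv, mukaiExtension_mukaiCoord_symm, LinearEquiv.ofBijective_apply, hw, neg_smul,
    add_neg_cancel_right]

lemma mukaiExtension_restrict (hh : Function.Bijective h) (w p : M × ℤ) :
    mukaiExtension m (LinearEquiv.ofBijective h hh) w (p.2, p.1, p.2 * m) =
      ((h p).2, (h p).1, (h p).2 * m) := by
  have hp (q : M × ℤ) : ((q.2, q.1, q.2 * m) : ℤ × M × ℤ) = (mukaiCoord m).symm (0, q) := by
    simp
  rw [hp, hp, mukaiExtension_mukaiCoord_symm, LinearEquiv.ofBijective_apply, zero_smul, add_zero]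

lemma exists_map_eq_add_smul_of_extension {g : (ℤ × M × ℤ) →ₗ[ℤ] ℤ × M × ℤ}
    (hfix : g (1, 0, -m) = (1, 0, -m))
    (hres : ∀ p : M × ℤ, g (p.2, p.1, p.2 * m) = ((h p).2, (h p).1, (h p).2 * m)) :
    ∃ w : M × ℤ, h (0, 1) = (0, 1) + (2 * m) • w := by
  have hsplit : ((1, 0, 1 * m) : ℤ × M × ℤ) = (1, 0, -m) + (2 * m) • (0, 0, 1) := by
    ext <;> simp; ring
  have key := congrArg (fun x => (mukaiCoord m x).2) (hres (0, 1))
  simp only [hsplit, map_add, map_smul, hfix, mukaiCoord_apply, Prod.snd_add, Prod.smul_snd] at key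
  exact ⟨_, key.symm⟩

lemma exists_isMukaiExtension_iff (hsymm : ∀ x y, B x y = B y x) (hm : m ≠ 0)
    (hh : Function.Bijective h) (hiso : (perpForm B m).IsOrthogonal h) :
    (∃ g, IsMukaiExtension B m h g) ↔ ∃ w : M × ℤ, h (0, 1) = (0, 1) + (2 * m) • w := by
  refine ⟨fun ⟨g, _, _, hfix, hres⟩ => exists_map_eq_add_smul_of_extension hfix hres,
    fun ⟨w, hw⟩ => ?_⟩
  let g := mukaiExtension m (LinearEquiv.ofBijective h hh) w
  exact ⟨g, g.bijective, isOrthogonal_mukaiExtension hsymm hm hh hiso hw,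
    mukaiExtension_apply_one_zero_neg hh hw, mukaiExtension_restrict hh w⟩

end

theorem stabilizer_is_kernel_of_discriminant_action_general
    (m : ℕ) (hm : 1 ≤ m)
    {M : Type} [AddCommGroup M] [Module ℤ M]
    (B : M →ₗ[ℤ] M →ₗ[ℤ] ℤ) (hsymm : ∀ x y, B x y = B y x)
    (hunimod : Function.Bijective B) :
    (∀ h : (M × ℤ) →ₗ[ℤ] (M × ℤ), Function.Bijective h →
      (∀ x y, perpForm B (m : ℤ) (h x) (h y) = perpForm B (m : ℤ) x y) →
      ((∃ g : (ℤ × M × ℤ) →ₗ[ℤ] (ℤ × M × ℤ), Function.Bijective g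
          ∧ (∀ x y, mukaiForm B (g x) (g y) = mukaiForm B x y)
          ∧ g ((1 : ℤ), (0 : M), -(m : ℤ)) = ((1 : ℤ), (0 : M), -(m : ℤ))
          ∧ (∀ p : M × ℤ,
              g ((p.2, p.1, p.2 * (m : ℤ)) : ℤ × M × ℤ)
                = (((h p).2, (h p).1, (h p).2 * (m : ℤ)) : ℤ × M × ℤ)))
        ↔ (∀ f : (M × ℤ) →ₗ[ℤ] ℤ,
            (f ∘ₗ h - f) ∈ LinearMap.range (perpForm B (m : ℤ)))))
    ∧ ((∀ h : (M × ℤ) →ₗ[ℤ] (M × ℤ), Function.Bijective h →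
        (∀ x y, perpForm B (m : ℤ) (h x) (h y) = perpForm B (m : ℤ) x y) →
        (∃ g : (ℤ × M × ℤ) →ₗ[ℤ] (ℤ × M × ℤ), Function.Bijective g
          ∧ (∀ x y, mukaiForm B (g x) (g y) = mukaiForm B x y)
          ∧ g ((1 : ℤ), (0 : M), -(m : ℤ)) = ((1 : ℤ), (0 : M), -(m : ℤ))
          ∧ (∀ p : M × ℤ,
              g ((p.2, p.1, p.2 * (m : ℤ)) : ℤ × M × ℤ)
                = (((h p).2, (h p).1, (h p).2 * (m : ℤ)) : ℤ × M × ℤ))))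
      ↔ m = 1) := by
  -- All `ℤ`-module structures on `M` coincide; the lemmas above use the canonical one.
  obtain rfl : ‹Module ℤ M› = AddCommGroup.toIntModule M := Subsingleton.elim _ _
  have hm0 : (m : ℤ) ≠ 0 := by omega
  refine ⟨fun h hh hiso => ?_, fun hall => ?_, ?_⟩
  · rw [forall_comp_sub_mem_range_perpForm_iff hunimod.2 hh.2 hiso,
      exists_perpForm_apply_eq_iff hm0 hunimod.1 hh hiso]
    exact exists_isMukaiExtension_iff hsymm hm0 hh hiso
  · have hneg : Function.Bijective (-LinearMap.id : M × ℤ →ₗ[ℤ] M × ℤ) :=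
      neg_involutive.bijective
    have hneg_iso : (perpForm B m).IsOrthogonal (-LinearMap.id : M × ℤ →ₗ[ℤ] M × ℤ) :=
      fun x y => by simp only [LinearMap.neg_apply, LinearMap.id_apply, map_neg, neg_neg]
    obtain ⟨w, hw⟩ := (exists_isMukaiExtension_iff hsymm hm0 hneg hneg_iso).1 (hall _ hneg hneg_iso)
    exact_mod_cast eq_one_of_neg_eq_add_smul (by omega) hw
  · rintro rfl h hh hiso
    rw [Nat.cast_one] at hiso ⊢
    exact (exists_isMukaiExtension_iff hsymm one_ne_zero hh hiso).2
      (by simpa using exists_map_eq_add_two_smul hunimod hh hiso)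

/-- for `v = (1,0,−m)`, an isometry `h` of `v^⊥` extends to an
isometry of the Mukai lattice fixing `v` (i.e. lies in `Γ_v`) if and only if the
induced map on the discriminant group `(v^⊥)^*/v^⊥` is the identity; that is,
`Γ_v` is the kernel of `O(v^⊥) → O((v^⊥)^*/v^⊥)`.  In particular every isometry
of `v^⊥` so extends if and only if `m = 1`. -/
theorem stabilizer_is_kernel_of_discriminant_action
    (m : ℕ) (hm : 1 ≤ m)
    {M : Type} [AddCommGroup M] [Module ℤ M] [Module.Free ℤ M] [Module.Finite ℤ M]
    (B : M →ₗ[ℤ] M →ₗ[ℤ] ℤ) (hsymm : ∀ x y, B x y = B y x)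
    (heven : ∀ c, Even (B c c)) (hunimod : Function.Bijective B) :
    (∀ h : (M × ℤ) →ₗ[ℤ] (M × ℤ), Function.Bijective h →
      (∀ x y, perpForm B (m : ℤ) (h x) (h y) = perpForm B (m : ℤ) x y) →
      ((∃ g : (ℤ × M × ℤ) →ₗ[ℤ] (ℤ × M × ℤ), Function.Bijective g
          ∧ (∀ x y, mukaiForm B (g x) (g y) = mukaiForm B x y)
          ∧ g ((1 : ℤ), (0 : M), -(m : ℤ)) = ((1 : ℤ), (0 : M), -(m : ℤ))
          ∧ (∀ p : M × ℤ,
              g ((p.2, p.1, p.2 * (m : ℤ)) : ℤ × M × ℤ)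
                = (((h p).2, (h p).1, (h p).2 * (m : ℤ)) : ℤ × M × ℤ)))
        ↔ (∀ f : (M × ℤ) →ₗ[ℤ] ℤ,
            (f ∘ₗ h - f) ∈ LinearMap.range (perpForm B (m : ℤ)))))
    ∧ ((∀ h : (M × ℤ) →ₗ[ℤ] (M × ℤ), Function.Bijective h →
        (∀ x y, perpForm B (m : ℤ) (h x) (h y) = perpForm B (m : ℤ) x y) →
        (∃ g : (ℤ × M × ℤ) →ₗ[ℤ] (ℤ × M × ℤ), Function.Bijective g
          ∧ (∀ x y, mukaiForm B (g x) (g y) = mukaiForm B x y)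
          ∧ g ((1 : ℤ), (0 : M), -(m : ℤ)) = ((1 : ℤ), (0 : M), -(m : ℤ))
          ∧ (∀ p : M × ℤ,
              g ((p.2, p.1, p.2 * (m : ℤ)) : ℤ × M × ℤ)
                = (((h p).2, (h p).1, (h p).2 * (m : ℤ)) : ℤ × M × ℤ))))
      ↔ m = 1) :=
  stabilizer_is_kernel_of_discriminant_action_general m hm B hsymm hunimod
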